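/- In the free associative conformal algebra C(B, N), for any u ∈ T and any i ∈ ℤ_{≥0}, the leading word of D^i([u]) equals u D^i (the word u with its final D-exponent increased by i); and if u > v in T, then the leading word of D^i([u]) is strictly greater than the leading word of D^i([v]). -/

import Mathlib

/-!  Basic definitions for (associative) conformal algebras, the free
associative conformal algebra `C(B,N)`, normal words, the weight ordering,
normal `S`-words, compositions and Gröbner–Shirshov bases, following
Ni–Chen, "A new Composition-Diamond lemma for associative conformal algebras". -/

universe u v w

open scoped BigOperators

/-- A conformal algebra over a field `K`. -/
structure ConformalAlgebra (K : Type u) [Field K] (C : Type w)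
    [AddCommGroup C] [Module K C] where
  mul : ℕ → C →ₗ[K] C →ₗ[K] C
  D : C →ₗ[K] C
  locality : ∀ a b : C, ∃ N : ℕ, ∀ n : ℕ, N ≤ n → mul n a b = 0
  leibniz : ∀ (n : ℕ) (a b : C), D (mul n a b) = mul n (D a) b + mul n a (D b)
  D_mul : ∀ (n : ℕ) (a b : C), 0 < n → mul n (D a) b = -((n : K) • mul (n - 1) a b)
  D_mul_zero : ∀ a b : C, mul 0 (D a) b = 0

/-- An associative conformal algebra. -/
structure AssocConformalAlgebra (K : Type u) [Field K] (C : Type w)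
    [AddCommGroup C] [Module K C] extends ConformalAlgebra K C where
  assoc : ∀ (n m : ℕ) (a b c : C),
    mul m (mul n a b) c =
      ∑ t ∈ Finset.range (n + 1),
        ((-1 : K) ^ t * (n.choose t : K)) • mul (n - t) a (mul (m + t) b c)

variable {K : Type u} [Field K] {C : Type w} [AddCommGroup C] [Module K C]

/-- The conjugate sum `{y_(n) x} = Σ_{m≥0} (-1)^{n+m} (1/m!) D^m (f (n+m) y x)`;
a finite sum by locality. -/
noncomputable def conjOp (D : C →ₗ[K] C) (f : ℕ → C → C → C) (n : ℕ) (y x : C) : C :=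
  ∑ᶠ m : ℕ, ((-1 : K) ^ (n + m) * ((m.factorial : K))⁻¹) • (D ^ m) (f (n + m) y x)

/-- The conformal commutator `x_[n] y = x_(n) y − {y_(n) x}`. -/
noncomputable def cBracket (A : AssocConformalAlgebra K C) (n : ℕ) (x y : C) : C :=
  A.mul n x y - conjOp A.D (fun m u v => A.mul m u v) n y x

/-- An associative normal word `b₁_(n₁) ⋯ b_k_(n_k) D^i b_{k+1}`. -/
structure NormalWord (B : Type v) (N : ℕ) where
  body : List (B × Fin N)
  last : B
  exp : ℕ

namespace NormalWord

variable {B : Type v} {N : ℕ}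

/-- `u D^i` : raise the final `D`-exponent by `i`. -/
def shiftD (u : NormalWord B N) (i : ℕ) : NormalWord B N := ⟨u.body, u.last, u.exp + i⟩

/-- Concatenation `a_(n) u` of a `D`-free word `a` with `u`. -/
def concat (u : NormalWord B N) (n : Fin N) (v : NormalWord B N) : NormalWord B N :=
  ⟨u.body ++ (u.last, n) :: v.body, v.last, v.exp⟩

/-- `u^{\D} ♮ v` : drop the final `D`-exponent of `u` and concatenate with `v`,
all junction indices being `N − 1`. -/
def natMul (u v : NormalWord B N) (hN : 0 < N) : NormalWord B N :=
  ⟨u.body ++ (u.last, ⟨N - 1, Nat.sub_lt hN one_pos⟩) ::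
      v.body.map (fun p => (p.1, (⟨N - 1, Nat.sub_lt hN one_pos⟩ : Fin N))),
    v.last, v.exp⟩

end NormalWord

/-- The strict weight ordering on associative normal words: compare lengths,
then the body lexicographically, then the last letter, then the `D`-exponent. -/
def wtLT {B : Type v} {N : ℕ} (r : B → B → Prop) (u v : NormalWord B N) : Prop :=
  u.body.length < v.body.length ∨
    (u.body.length = v.body.length ∧
      (List.Lex (Prod.Lex r (· < ·)) u.body v.body ∨
        (u.body = v.body ∧ (r u.last v.last ∨ (u.last = v.last ∧ u.exp < v.exp)))))

def wtLE {B : Type v} {N : ℕ} (r : B → B → Prop) (u v : NormalWord B N) : Prop :=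
  wtLT r u v ∨ u = v

/-- Words on the alphabet `D^ω(B) = {D^i b}`. -/
inductive CWord (B : Type v) : Type v
  | gen : B → ℕ → CWord B
  | mul : ℕ → CWord B → CWord B → CWord B

/-- Length of a word. -/
def CWord.length {B : Type v} : CWord B → ℕ
  | .gen _ _ => 1
  | .mul _ u v => u.length + v.length

/-- The free associative conformal algebra `C(B,N)` generated by `B` with
uniformly bounded locality `N`, axiomatized by its universal property. -/
structure FreeAssocConformal (K : Type u) [Field K] (B : Type v) (N : ℕ)
    (C : Type w) [AddCommGroup C] [Module K C] where
  alg : AssocConformalAlgebra K C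
  ι : B → C
  loc : ∀ (b b' : B) (n : ℕ), N ≤ n → alg.mul n (ι b) (ι b') = 0
  universal : ∀ (C' : Type w) [AddCommGroup C'] [Module K C']
      (A' : AssocConformalAlgebra K C') (ε : B → C'),
      (∀ (b b' : B) (n : ℕ), N ≤ n → A'.mul n (ε b) (ε b') = 0) →
      ∃! φ : C →ₗ[K] C', (∀ b, φ (ι b) = ε b) ∧
        (∀ (n : ℕ) (x y : C), φ (alg.mul n x y) = A'.mul n (φ x) (φ y)) ∧
        (∀ x : C, φ (alg.D x) = A'.D (φ x))

variable {B : Type v} {N : ℕ}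

/-- Evaluate a `D`-free prefix (a list of letters with indices) applied to `x`,
right-normed. -/
def evalAux (F : FreeAssocConformal K B N C) : List (B × Fin N) → C → C
  | [], x => x
  | p :: rest, x => F.alg.mul (p.2 : ℕ) (F.ι p.1) (evalAux F rest x)

/-- The element of `C(B,N)` given by a normal word (right-normed bracketing). -/
def evalWord (F : FreeAssocConformal K B N C) (u : NormalWord B N) : C :=
  evalAux F u.body ((F.alg.D ^ u.exp) (F.ι u.last))

/-- Evaluate an arbitrary word on `D^ω(B)` in `C(B,N)`. -/
def evalCWord (F : FreeAssocConformal K B N C) : CWord B → C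
  | .gen b i => (F.alg.D ^ i) (F.ι b)
  | .mul n u v => F.alg.mul n (evalCWord F u) (evalCWord F v)

/-- `w` is the leading word `\bar f` of `f` with respect to the normal-word
basis `bas` and the weight ordering induced by `r`. -/
def IsLead (bas : Module.Basis (NormalWord B N) K C) (r : B → B → Prop)
    (f : C) (w : NormalWord B N) : Prop :=
  bas.repr f w ≠ 0 ∧ ∀ w', bas.repr f w' ≠ 0 → w' = w ∨ wtLT r w' w

/-- A set of polynomials is monic if each has leading coefficient `1`. -/
def MonicSet (bas : Module.Basis (NormalWord B N) K C) (r : B → B → Prop) (S : Set C) : Prop :=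
  ∀ s ∈ S, ∃ w, IsLead bas r s w ∧ bas.repr s w = 1

/-- Normal `S`-words together with their (formal) leading words:
either `[a_(n) s_(m) c]` with `a, \bar s` `D`-free, or `[a_(n) D^i s]`
with `a` `D`-free; the prefix `a_(n)` is encoded by the list `p`
(empty list = empty `a`). -/
inductive IsNSWord (F : FreeAssocConformal K B N C)
    (bas : Module.Basis (NormalWord B N) K C) (r : B → B → Prop) (S : Set C) :
    C → NormalWord B N → Prop
  | first (p : List (B × Fin N)) (s : C) (hs : s ∈ S) (sw : NormalWord B N)
      (hlead : IsLead bas r s sw) (hfree : sw.exp = 0) (m : Fin N) (c : NormalWord B N) :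
      IsNSWord F bas r S (evalAux F p (F.alg.mul (m : ℕ) s (evalWord F c)))
        ⟨p ++ sw.body ++ (sw.last, m) :: c.body, c.last, c.exp⟩
  | second (p : List (B × Fin N)) (s : C) (hs : s ∈ S) (sw : NormalWord B N)
      (hlead : IsLead bas r s sw) (i : ℕ) :
      IsNSWord F bas r S (evalAux F p ((F.alg.D ^ i) s)) ⟨p ++ sw.body, sw.last, sw.exp + i⟩

/-- `h` can be written as a linear combination of normal `S`-words whose
(formal leading) words all satisfy `P`. -/
def SRep (F : FreeAssocConformal K B N C) (bas : Module.Basis (NormalWord B N) K C)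
    (r : B → B → Prop) (S : Set C) (h : C) (P : NormalWord B N → Prop) : Prop :=
  ∃ (n : ℕ) (α : Fin n → K) (g : Fin n → C) (wd : Fin n → NormalWord B N),
    h = ∑ i, α i • g i ∧ ∀ i, IsNSWord F bas r S (g i) (wd i) ∧ P (wd i)

/-- `h` is trivial modulo `S`: a linear combination of normal `S`-words with
leading words `≤ \bar h`. -/
def TrivialMod (F : FreeAssocConformal K B N C) (bas : Module.Basis (NormalWord B N) K C)
    (r : B → B → Prop) (S : Set C) (h : C) : Prop :=
  SRep F bas r S h (fun wd => ∀ hw, IsLead bas r h hw → wtLE r wd hw)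

/-- `f` is not `D`-free: some monomial has positive `D`-exponent. -/
def NotDFree (bas : Module.Basis (NormalWord B N) K C) (f : C) : Prop :=
  ∃ w, bas.repr f w ≠ 0 ∧ w.exp ≠ 0

/-- All left multiplication compositions `b_(n) s`, `n ≥ N`, are trivial. -/
def LeftMultClosed (F : FreeAssocConformal K B N C) (bas : Module.Basis (NormalWord B N) K C)
    (r : B → B → Prop) (S : Set C) : Prop :=
  ∀ s ∈ S, ∀ (b : B) (n : ℕ), N ≤ n → TrivialMod F bas r S (F.alg.mul n (F.ι b) s)

/-- All right multiplication compositions `s_(n) b` (for `\bar s` not `D`-free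
and `n < N`, or `s` not `D`-free and `n ≥ N`) are trivial. -/
def RightMultClosed (F : FreeAssocConformal K B N C) (bas : Module.Basis (NormalWord B N) K C)
    (r : B → B → Prop) (S : Set C) : Prop :=
  ∀ s ∈ S, ∀ (b : B) (n : ℕ),
    ((∃ sw, IsLead bas r s sw ∧ sw.exp ≠ 0) ∧ n < N) ∨ (NotDFree bas s ∧ N ≤ n) →
    TrivialMod F bas r S (F.alg.mul n s (F.ι b))

/-- `S` is a Gröbner–Shirshov basis in `C(B,N)`: `S` is monic and all
compositions (inclusion, right inclusion, intersection, right intersection,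
left and right multiplication) are trivial modulo `S`. -/
def IsGSBasis (F : FreeAssocConformal K B N C) (bas : Module.Basis (NormalWord B N) K C)
    (r : B → B → Prop) (S : Set C) : Prop :=
  MonicSet bas r S ∧
  -- inclusion: \bar f = a_(n) \bar g_(m) c
  (∀ f ∈ S, ∀ g ∈ S, ∀ fw gw : NormalWord B N,
    IsLead bas r f fw → IsLead bas r g gw → gw.exp = 0 →
    ∀ (p : List (B × Fin N)) (m : Fin N) (c : NormalWord B N),
      fw = ⟨p ++ sw₁ p gw m c, c.last, c.exp⟩ →
      TrivialMod F bas r S (f - evalAux F p (F.alg.mul (m : ℕ) g (evalWord F c)))) ∧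
  -- right inclusion: \bar f = a_(n) \bar g D^i
  (∀ f ∈ S, ∀ g ∈ S, ∀ fw gw : NormalWord B N,
    IsLead bas r f fw → IsLead bas r g gw →
    ∀ (p : List (B × Fin N)) (i : ℕ),
      fw = ⟨p ++ gw.body, gw.last, gw.exp + i⟩ →
      TrivialMod F bas r S (f - evalAux F p ((F.alg.D ^ i) g))) ∧
  -- intersection: w = \bar f_(m) c = a_(n) \bar g, |\bar f| + |\bar g| > |w|
  (∀ f ∈ S, ∀ g ∈ S, ∀ fw gw : NormalWord B N,
    IsLead bas r f fw → IsLead bas r g gw → fw.exp = 0 →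
    ∀ (p : List (B × Fin N)) (m : Fin N) (c : NormalWord B N),
      fw.body ++ (fw.last, m) :: c.body = p ++ gw.body →
      c.last = gw.last → c.exp = gw.exp →
      p.length < fw.body.length + 1 →
      TrivialMod F bas r S (F.alg.mul (m : ℕ) f (evalWord F c) - evalAux F p g)) ∧
  -- right intersection: w = \bar f D^i = a_(n) \bar g, i > 0
  (∀ f ∈ S, ∀ g ∈ S, ∀ fw gw : NormalWord B N,
    IsLead bas r f fw → IsLead bas r g gw →
    ∀ (p : List (B × Fin N)) (i : ℕ), 0 < i →
      fw.body = p ++ gw.body → fw.last = gw.last → fw.exp + i = gw.exp →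
      TrivialMod F bas r S ((F.alg.D ^ i) f - evalAux F p g)) ∧
  LeftMultClosed F bas r S ∧ RightMultClosed F bas r S
where sw₁ (p : List (B × Fin N)) (gw : NormalWord B N) (m : Fin N) (c : NormalWord B N) :
    List (B × Fin N) := gw.body ++ (gw.last, m) :: c.body

/-- The set of `S`-irreducible normal words. -/
def Irr (F : FreeAssocConformal K B N C) (bas : Module.Basis (NormalWord B N) K C)
    (r : B → B → Prop) (S : Set C) : Set (NormalWord B N) :=
  {w | ¬ ∃ g : C, IsNSWord F bas r S g w}

/-- Membership in the (conformal) ideal generated by `S`. -/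
inductive InIdeal (F : FreeAssocConformal K B N C) (S : Set C) : C → Prop
  | mem {s : C} : s ∈ S → InIdeal F S s
  | zero : InIdeal F S 0
  | add {x y : C} : InIdeal F S x → InIdeal F S y → InIdeal F S (x + y)
  | smul (a : K) {x : C} : InIdeal F S x → InIdeal F S (a • x)
  | deriv {x : C} : InIdeal F S x → InIdeal F S (F.alg.D x)
  | mul_left (n : ℕ) (y : C) {x : C} : InIdeal F S x → InIdeal F S (F.alg.mul n y x)
  | mul_right (n : ℕ) (y : C) {x : C} : InIdeal F S x → InIdeal F S (F.alg.mul n x y)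

/-- The ideal generated by `S`, as a submodule. -/
def idealOf (F : FreeAssocConformal K B N C) (S : Set C) : Submodule K C where
  carrier := {x | InIdeal F S x}
  add_mem' := fun hx hy => InIdeal.add hx hy
  zero_mem' := InIdeal.zero
  smul_mem' := fun a _ hx => InIdeal.smul a hx

/-- `S`-words: words containing exactly one occurrence of some `D^i s`, `s ∈ S`. -/
inductive IsSWord (F : FreeAssocConformal K B N C) (S : Set C) : C → Prop
  | base {s : C} (hs : s ∈ S) (i : ℕ) : IsSWord F S ((F.alg.D ^ i) s)
  | mul_right {u : C} (hu : IsSWord F S u) (v : CWord B) (m : ℕ) :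
      IsSWord F S (F.alg.mul m u (evalCWord F v))
  | mul_left {u : C} (hu : IsSWord F S u) (v : CWord B) (m : ℕ) :
      IsSWord F S (F.alg.mul m (evalCWord F v) u)

/-- A reduced set: every monomial of each `s ∈ S` is `(S∖{s})`-irreducible. -/
def IsReducedSet (F : FreeAssocConformal K B N C) (bas : Module.Basis (NormalWord B N) K C)
    (r : B → B → Prop) (S : Set C) : Prop :=
  ∀ s ∈ S, ∀ w, bas.repr s w ≠ 0 → w ∈ Irr F bas r (S \ {s})
/-! The leading word of `D^i [u]` comes from hitting the last letter of `u` with all `i`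
derivations. By the Leibniz rule every other term puts a `D` on an inner letter
`a_(n)`, and `(D a)_(n) x = -n a_(n-1) x` (which vanishes for `n = 0`) lowers that
junction index, hence the word, in the weight ordering. -/

namespace NormalWord

def cons (a : B × Fin N) (w : NormalWord B N) : NormalWord B N := ⟨a :: w.body, w.last, w.exp⟩

def wtKey (w : NormalWord B N) : ℕ × List (B × Fin N) × B × ℕ :=
  (w.body.length, w.body, w.last, w.exp)

theorem shiftD_shiftD (w : NormalWord B N) (i j : ℕ) :
    (w.shiftD i).shiftD j = w.shiftD (i + j) := by
  simp only [shiftD, Nat.add_assoc]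

end NormalWord

open NormalWord

section WeightOrder

variable {r : B → B → Prop}

theorem wtLT_iff_lex_wtKey {u v : NormalWord B N} :
    wtLT r u v ↔
      Prod.Lex (· < ·) (Prod.Lex (List.Lex (Prod.Lex r (· < ·))) (Prod.Lex r (· < ·)))
        u.wtKey v.wtKey := by
  simp only [wtLT, wtKey, Prod.lex_def]

instance wtLT.instIsTrans [IsTrans B r] : IsTrans (NormalWord B N) (wtLT r) where
  trans u v w huv hvw := by
    have : IsTrans (List (B × Fin N)) (List.Lex (Prod.Lex r (· < ·))) :=
      ⟨fun _ _ _ => List.lex_trans fun h₁ h₂ => _root_.trans h₁ h₂⟩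
    rw [wtLT_iff_lex_wtKey] at *
    exact _root_.trans huv hvw

instance wtLT.instIrrefl [Std.Irrefl r] : Std.Irrefl (wtLT r : NormalWord B N → _ → Prop) where
  irrefl w hw := by
    have : Std.Irrefl (List.Lex (Prod.Lex r (· < ·) : B × Fin N → _ → Prop)) :=
      ⟨List.lex_irrefl _root_.irrefl⟩
    rw [wtLT_iff_lex_wtKey] at hw
    exact _root_.irrefl _ hw

theorem wtLT_shiftD {u v : NormalWord B N} (i : ℕ) (h : wtLT r v u) :
    wtLT r (v.shiftD i) (u.shiftD i) := by
  rcases h with h | ⟨hlen, h | ⟨hbody, h | ⟨hlast, h⟩⟩⟩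
  · exact Or.inl h
  · exact Or.inr ⟨hlen, Or.inl h⟩
  · exact Or.inr ⟨hlen, Or.inr ⟨hbody, Or.inl h⟩⟩
  · exact Or.inr ⟨hlen, Or.inr ⟨hbody, Or.inr ⟨hlast, Nat.add_lt_add_right h i⟩⟩⟩

theorem wtLT_cons (a : B × Fin N) {u v : NormalWord B N} (h : wtLT r v u) :
    wtLT r (v.cons a) (u.cons a) := by
  rcases h with h | ⟨hlen, h | ⟨hbody, h⟩⟩
  · exact Or.inl (Nat.succ_lt_succ h)
  · exact Or.inr ⟨congrArg Nat.succ hlen, Or.inl (List.Lex.cons h)⟩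
  · exact Or.inr ⟨congrArg Nat.succ hlen, Or.inr ⟨congrArg (a :: ·) hbody, h⟩⟩

theorem wtLT_trans [IsTrans B r] {u v w : NormalWord B N} (huv : wtLT r u v)
    (hvw : wtLT r v w) : wtLT r u w :=
  _root_.trans huv hvw

end WeightOrder

theorem isLead_of_sub_mem_span {r : B → B → Prop} [Std.Irrefl r]
    {bas : Module.Basis (NormalWord B N) K C} {f : C} {w : NormalWord B N}
    (h : f - bas w ∈ Submodule.span K (bas '' {w' | wtLT r w' w})) : IsLead bas r f w := by
  rw [Module.Basis.mem_span_image] at h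
  have hrepr : ∀ w', bas.repr f w' = Finsupp.single w 1 w' + bas.repr (f - bas w) w' := by
    simp
  have hlow : ∀ w', bas.repr (f - bas w) w' ≠ 0 → wtLT r w' w :=
    fun w' hw' => h (Finsupp.mem_support_iff.2 hw')
  have hw0 : bas.repr (f - bas w) w = 0 := by
    by_contra h0
    exact irrefl w (hlow w h0)
  refine ⟨?_, fun w' hw' => ?_⟩
  · rw [hrepr, Finsupp.single_eq_same, hw0, add_zero]
    exact one_ne_zero
  · by_cases hw : w' = w
    · exact Or.inl hw
    · rw [hrepr, Finsupp.single_eq_of_ne hw, zero_add] at hw'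
      exact Or.inr (hlow w' hw')

section LowerSpan

variable (F : FreeAssocConformal K B N C) (r : B → B → Prop)

def lowerSpan (w : NormalWord B N) : Submodule K C :=
  Submodule.span K (evalWord F '' {w' | wtLT r w' w})

variable {F r}

theorem evalWord_mem_lowerSpan {w' w : NormalWord B N} (h : wtLT r w' w) :
    evalWord F w' ∈ lowerSpan F r w :=
  Submodule.subset_span ⟨w', h, rfl⟩

theorem lowerSpan_mono [IsTrans B r] {w₁ w₂ : NormalWord B N} (h : wtLT r w₁ w₂) :
    lowerSpan F r w₁ ≤ lowerSpan F r w₂ :=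
  Submodule.span_mono (Set.image_mono fun _ hw' => wtLT_trans hw' h)

theorem evalWord_cons (a : B × Fin N) (w : NormalWord B N) :
    evalWord F (w.cons a) = F.alg.mul a.2 (F.ι a.1) (evalWord F w) :=
  rfl

theorem mul_mem_lowerSpan_cons (a : B × Fin N) {w : NormalWord B N} {g : C}
    (hg : g ∈ lowerSpan F r w) : F.alg.mul a.2 (F.ι a.1) g ∈ lowerSpan F r (w.cons a) := by
  refine (Submodule.span_le (p := (lowerSpan F r (w.cons a)).comap _).2 ?_) hg
  rintro _ ⟨w', hw', rfl⟩
  change F.alg.mul a.2 (F.ι a.1) (evalWord F w') ∈ lowerSpan F r (w.cons a)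
  rw [← evalWord_cons]
  exact evalWord_mem_lowerSpan (wtLT_cons a hw')

theorem D_mul_mem_lowerSpan (a : B × Fin N) (w : NormalWord B N) :
    F.alg.mul a.2 (F.alg.D (F.ι a.1)) (evalWord F w) ∈ lowerSpan F r ((w.shiftD 1).cons a) := by
  obtain ⟨b, n⟩ := a
  rcases Nat.eq_zero_or_pos n with hn | hn
  · rw [hn, F.alg.D_mul_zero]
    exact zero_mem _
  · rw [F.alg.D_mul _ _ _ hn]
    refine neg_mem (Submodule.smul_mem _ _ ?_)
    have hlower : wtLT r (w.cons (b, ⟨n - 1, by omega⟩)) ((w.shiftD 1).cons (b, n)) :=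
      Or.inr ⟨rfl, Or.inl (List.Lex.rel
        (Prod.Lex.right b (Fin.lt_def.2 (Nat.sub_lt hn one_pos))))⟩
    exact evalWord_mem_lowerSpan hlower

theorem D_evalWord_sub_mem_lowerSpan (w : NormalWord B N) :
    F.alg.D (evalWord F w) - evalWord F (w.shiftD 1) ∈ lowerSpan F r (w.shiftD 1) := by
  obtain ⟨p, b, e⟩ := w
  induction p with
  | nil =>
    change F.alg.D ((F.alg.D ^ e) (F.ι b)) - (F.alg.D ^ (e + 1)) (F.ι b) ∈ _
    rw [pow_succ', Module.End.mul_apply, sub_self]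
    exact zero_mem _
  | cons a p ih =>
    set w : NormalWord B N := ⟨p, b, e⟩
    change F.alg.D (evalWord F (w.cons a)) - evalWord F ((w.shiftD 1).cons a)
      ∈ lowerSpan F r ((w.shiftD 1).cons a)
    have hsplit : F.alg.D (evalWord F (w.cons a)) - evalWord F ((w.shiftD 1).cons a)
        = F.alg.mul a.2 (F.alg.D (F.ι a.1)) (evalWord F w)
          + F.alg.mul a.2 (F.ι a.1) (F.alg.D (evalWord F w) - evalWord F (w.shiftD 1)) := by
      rw [evalWord_cons, evalWord_cons, F.alg.leibniz, map_sub]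
      abel
    rw [hsplit]
    exact add_mem (D_mul_mem_lowerSpan a w) (mul_mem_lowerSpan_cons a ih)

theorem D_mem_lowerSpan [IsTrans B r] {w : NormalWord B N} {g : C}
    (hg : g ∈ lowerSpan F r w) : F.alg.D g ∈ lowerSpan F r (w.shiftD 1) := by
  refine (Submodule.span_le (p := (lowerSpan F r (w.shiftD 1)).comap F.alg.D).2 ?_) hg
  rintro _ ⟨w', hw', rfl⟩
  have hshift : wtLT r (w'.shiftD 1) (w.shiftD 1) := wtLT_shiftD 1 hw'
  have hsum := add_mem (lowerSpan_mono hshift (D_evalWord_sub_mem_lowerSpan (F := F) w'))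
    (evalWord_mem_lowerSpan hshift)
  simpa only [sub_add_cancel, SetLike.mem_coe, Submodule.mem_comap] using hsum

theorem D_pow_evalWord_sub_mem_lowerSpan [IsTrans B r] (u : NormalWord B N) (i : ℕ) :
    (F.alg.D ^ i) (evalWord F u) - evalWord F (u.shiftD i) ∈ lowerSpan F r (u.shiftD i) := by
  induction i with
  | zero => simp [shiftD]
  | succ i ih =>
    have hsplit : (F.alg.D ^ (i + 1)) (evalWord F u) - evalWord F (u.shiftD (i + 1))
        = F.alg.D ((F.alg.D ^ i) (evalWord F u) - evalWord F (u.shiftD i))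
          + (F.alg.D (evalWord F (u.shiftD i)) - evalWord F (u.shiftD (i + 1))) := by
      rw [pow_succ', Module.End.mul_apply, map_sub]
      abel
    have hD := D_mem_lowerSpan ih
    have hstep := D_evalWord_sub_mem_lowerSpan (F := F) (r := r) (u.shiftD i)
    rw [shiftD_shiftD] at hD hstep
    rw [hsplit]
    exact add_mem hD hstep

end LowerSpan

theorem lead_D_pow_general {K : Type u} [Field K]
    {B : Type v} {N : ℕ} {C : Type w} [AddCommGroup C] [Module K C]
    (F : FreeAssocConformal K B N C) (bas : Module.Basis (NormalWord B N) K C)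
    (hbas : ∀ w, bas w = evalWord F w)
    (r : B → B → Prop) (hr : IsWellOrder B r)
    (u v : NormalWord B N) (i : ℕ) :
    IsLead bas r ((F.alg.D ^ i) (evalWord F u)) (u.shiftD i) ∧
    (wtLT r v u → wtLT r (v.shiftD i) (u.shiftD i)) := by
  have hb : ⇑bas = evalWord F := funext hbas
  refine ⟨isLead_of_sub_mem_span ?_, wtLT_shiftD i⟩
  rw [hb]
  exact D_pow_evalWord_sub_mem_lowerSpan u i

theorem lead_D_pow {K : Type u} [Field K] [CharZero K]
    {B : Type v} {N : ℕ} {C : Type w} [AddCommGroup C] [Module K C]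
    (F : FreeAssocConformal K B N C) (bas : Module.Basis (NormalWord B N) K C)
    (hbas : ∀ w, bas w = evalWord F w)
    (r : B → B → Prop) (hr : IsWellOrder B r)
    (u v : NormalWord B N) (i : ℕ) :
    IsLead bas r ((F.alg.D ^ i) (evalWord F u)) (u.shiftD i) ∧
    (wtLT r v u → wtLT r (v.shiftD i) (u.shiftD i)) :=
  lead_D_pow_general F bas hbas r hr u v i
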